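/- arXiv:2603.27323 — 4 statements merged into one kernel-verified Lean document; each statement's English description precedes it below -/
import Mathlib

section
/- For every x > 0, the six-parameter Beta modified Weibull cumulative distribution function F(x) = (1/B(a,b))·∫₀^{G(x)} u^{a−1}(1−u)^{b−1} du is differentiable at x with derivative F'(x) = (1/B(a,b))·G(x)^{a−1}·(1−G(x))^{b−1}·g(x). -/
open Real MeasureTheory Filter Topology Set

/-- Four-parameter modified Weibull survival function. -/
noncomputable def mwS (γ β lam τ x : ℝ) : ℝ :=
  Real.exp (-(lam ^ (1 - τ) * ((x / β) ^ γ + lam) ^ τ - lam) / τ)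

/-- Four-parameter modified Weibull cumulative distribution function. -/
noncomputable def mwG (γ β lam τ x : ℝ) : ℝ := 1 - mwS γ β lam τ x

/-- Four-parameter modified Weibull density. -/
noncomputable def mwg (γ β lam τ x : ℝ) : ℝ :=
  (γ / β) * (x / β) ^ (γ - 1) * lam ^ (1 - τ) * ((x / β) ^ γ + lam) ^ (τ - 1) *
    mwS γ β lam τ x

/-- The Beta function `B(a,b)` as an integral. -/
noncomputable def betaFun (a b : ℝ) : ℝ :=
  ∫ u in (0 : ℝ)..1, u ^ (a - 1) * (1 - u) ^ (b - 1)

/-- Six-parameter Beta modified Weibull cumulative distribution function. -/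
noncomputable def bmwF (a b γ β lam τ x : ℝ) : ℝ :=
  (1 / betaFun a b) * ∫ u in (0 : ℝ)..(mwG γ β lam τ x), u ^ (a - 1) * (1 - u) ^ (b - 1)

/-- Six-parameter Beta modified Weibull density. -/
noncomputable def bmwf (a b γ β lam τ x : ℝ) : ℝ :=
  (1 / betaFun a b) * mwG γ β lam τ x ^ (a - 1) * (1 - mwG γ β lam τ x) ^ (b - 1) *
    mwg γ β lam τ x

lemma mwG_hasDerivAt (γ β lam τ : ℝ) (hβ : 0 < β) (hlam : 0 < lam) (hτ : τ ≠ 0)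
    (x : ℝ) (hx : 0 < x) : HasDerivAt (mwG γ β lam τ) (mwg γ β lam τ x) x := by
  have hxβ : 0 < x / β := div_pos hx hβ
  have h1 : HasDerivAt (fun y => (y / β) ^ γ) (γ * (x / β) ^ (γ - 1) * (1 / β)) x := by
    have := (Real.hasDerivAt_rpow_const (x := x / β) (p := γ) (Or.inl hxβ.ne')).comp x
      ((hasDerivAt_id x).div_const β)
    simpa [div_eq_mul_inv, mul_comm, mul_assoc, Function.comp_def] using this
  have h2 := h1.add_const lam
  have hc : 0 < (x / β) ^ γ + lam := add_pos (Real.rpow_pos_of_pos hxβ γ) hlam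
  have h3 := (Real.hasDerivAt_rpow_const (x := (x / β) ^ γ + lam) (p := τ)
    (Or.inl hc.ne')).comp x h2
  have h4 := (((h3.const_mul (lam ^ (1 - τ))).sub_const lam).neg.div_const τ).exp
  have h5 := h4.const_sub 1
  have heq : mwG γ β lam τ =
      fun y => 1 - Real.exp (-(lam ^ (1 - τ) * ((y / β) ^ γ + lam) ^ τ - lam) / τ) := rfl
  rw [heq]
  refine h5.congr_deriv ?_
  simp only [Pi.neg_apply, Function.comp_apply]
  unfold mwg mwS
  field_simp

lemma mwG_mem (γ β lam τ : ℝ) (hβ : 0 < β) (hlam : 0 < lam) (hτ : τ ≠ 0)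
    (x : ℝ) (hx : 0 < x) : mwG γ β lam τ x ∈ Ioo (0:ℝ) 1 := by
  have hxβ : 0 < x / β := div_pos hx hβ
  have hcp : 0 < (x / β) ^ γ := Real.rpow_pos_of_pos hxβ γ
  set c := (x / β) ^ γ with hc
  have hr : 1 < (c + lam) / lam := by
    rw [lt_div_iff₀ hlam]; linarith
  have hrw : lam ^ (1 - τ) * (c + lam) ^ τ = lam * (((c + lam) / lam) ^ τ) := by
    rw [Real.div_rpow (by linarith) hlam.le, Real.rpow_sub hlam, Real.rpow_one]
    field_simp
  have hpos : 0 < (((c + lam) / lam) ^ τ - 1) / τ := by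
    rcases lt_or_gt_of_ne hτ with hτn | hτp
    · have := Real.rpow_lt_one_of_one_lt_of_neg hr hτn
      exact div_pos_of_neg_of_neg (by linarith) hτn
    · have : 1 < ((c + lam) / lam) ^ τ :=
        Real.one_lt_rpow_iff_of_pos (by positivity) |>.mpr (Or.inl ⟨hr, hτp⟩)
      exact div_pos (by linarith) hτp
  have key : 0 < (lam ^ (1 - τ) * (c + lam) ^ τ - lam) / τ := by
    rw [hrw]
    have : (lam * ((c + lam) / lam) ^ τ - lam) / τ
        = lam * ((((c + lam) / lam) ^ τ - 1) / τ) := by ring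
    rw [this]; positivity
  constructor
  · have h1 : Real.exp (-(lam ^ (1 - τ) * (c + lam) ^ τ - lam) / τ) < 1 := by
      rw [Real.exp_lt_one_iff, neg_div]; linarith
    show 0 < 1 - mwS γ β lam τ x
    unfold mwS; rw [← hc]; linarith
  · have h2 := Real.exp_pos (-(lam ^ (1 - τ) * (c + lam) ^ τ - lam) / τ)
    show 1 - mwS γ β lam τ x < 1
    unfold mwS; rw [← hc]; linarith

/-- `F` is differentiable at every `x > 0` with derivative
`(1/B(a,b)) · G(x)^(a-1) · (1-G(x))^(b-1) · g(x)`. -/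
theorem stmt_4 (γ β lam τ a b : ℝ) (hγ : 0 < γ) (hβ : 0 < β) (hlam : 0 < lam) (hτ : τ ≠ 0)
    (ha : 0 < a) (hb : 0 < b) (x : ℝ) (hx : 0 < x) :
    HasDerivAt (bmwF a b γ β lam τ)
      ((1 / betaFun a b) * mwG γ β lam τ x ^ (a - 1) * (1 - mwG γ β lam τ x) ^ (b - 1) *
        mwg γ β lam τ x) x := by
  set y0 := mwG γ β lam τ x with hy0def
  obtain ⟨hy0, hy1⟩ := mwG_mem γ β lam τ hβ hlam hτ x hx
  set h : ℝ → ℝ := fun u => u ^ (a - 1) * (1 - u) ^ (b - 1) with hh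
  have hmeas : Measurable h := by fun_prop
  have hint : IntervalIntegrable h volume 0 y0 := by
    apply (intervalIntegral.intervalIntegrable_rpow' (r := a - 1) (by linarith)).mul_continuousOn
    apply ContinuousOn.rpow_const (continuous_const.sub continuous_id).continuousOn
    intro u hu
    rw [uIcc_of_le hy0.le] at hu
    exact Or.inl (by have := hu.2; intro hc; simp at hc; linarith)
  have hcont : ContinuousAt h y0 := by
    apply ContinuousAt.mul
    · exact Real.continuousAt_rpow_const y0 (a - 1) (Or.inl hy0.ne')
    · exact (Real.continuousAt_rpow_const (1 - y0) (b - 1) (Or.inl (by linarith))).comp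
        ((continuous_const.sub continuous_id).continuousAt)
  have hsm : StronglyMeasurableAtFilter h (𝓝 y0) volume :=
    ⟨Set.univ, univ_mem, hmeas.aestronglyMeasurable.restrict⟩
  have hFTC : HasDerivAt (fun y => ∫ u in (0:ℝ)..y, h u) (h y0) y0 :=
    intervalIntegral.integral_hasDerivAt_right hint hsm hcont
  have hG := mwG_hasDerivAt γ β lam τ hβ hlam hτ x hx
  have hcomp := (hFTC.comp x hG).const_mul (1 / betaFun a b)
  have heq : bmwF a b γ β lam τ =
      fun y => (1 / betaFun a b) * ((fun y => ∫ u in (0:ℝ)..y, h u) (mwG γ β lam τ y)) := rfl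
  rw [heq]
  refine hcomp.congr_deriv ?_
  simp only [hh]
  ring
end

section
/- F(0) = 0 and, if τ > 0, F(x) tends to 1 as x tends to +∞; hence for τ > 0 the six-parameter Beta modified Weibull function F is a genuine cumulative distribution function on [0, ∞). -/
open Real MeasureTheory Filter Topology Set

lemma beta_intble (a b : ℝ) (ha : 0 < a) (hb : 0 < b) :
    IntervalIntegrable (fun u : ℝ => u ^ (a - 1) * (1 - u) ^ (b - 1)) volume 0 1 := by
  have h1 : IntervalIntegrable (fun u : ℝ => u ^ (a - 1) * (1 - u) ^ (b - 1)) volume 0 (1/2) := by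
    refine (intervalIntegral.intervalIntegrable_rpow' (by linarith)).mul_continuousOn ?_
    refine (continuousOn_const.sub continuousOn_id).rpow_const fun x hx => Or.inl ?_
    rw [Set.uIcc_of_le (by norm_num)] at hx
    have := hx.2
    intro h; replace h : (1:ℝ) - x = 0 := h; linarith
  have h2 : IntervalIntegrable (fun u : ℝ => u ^ (a - 1) * (1 - u) ^ (b - 1)) volume (1/2) 1 := by
    have hbase : IntervalIntegrable (fun u : ℝ => (1 - u) ^ (b - 1)) volume (1/2) 1 := by
      have := (intervalIntegral.intervalIntegrable_rpow' (a := 0) (b := 1/2) (r := b - 1)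
        (by linarith)).comp_sub_left 1
      norm_num at this
      exact this.symm
    have := hbase.mul_continuousOn (g := fun u : ℝ => u ^ (a - 1)) ?_
    · simpa [mul_comm] using this
    · refine continuousOn_id.rpow_const fun x hx => Or.inl ?_
      rw [Set.uIcc_of_le (by norm_num)] at hx
      have := hx.1; intro h; rw [id] at h; subst h; norm_num at this
  exact h1.trans h2

lemma beta_pos (a b : ℝ) (ha : 0 < a) (hb : 0 < b) : 0 < betaFun a b := by
  refine intervalIntegral.intervalIntegral_pos_of_pos_on (beta_intble a b ha hb) ?_ one_pos
  intro x hx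
  exact mul_pos (Real.rpow_pos_of_pos hx.1 _) (Real.rpow_pos_of_pos (by linarith [hx.2]) _)

/-- `F 0 = 0` and, if `τ > 0`, `F x → 1` as `x → ∞`. -/
theorem stmt_7 (γ β lam τ a b : ℝ) (hγ : 0 < γ) (hβ : 0 < β) (hlam : 0 < lam) (hτ : τ ≠ 0)
    (ha : 0 < a) (hb : 0 < b) :
    bmwF a b γ β lam τ 0 = 0 ∧
      (0 < τ → Filter.Tendsto (bmwF a b γ β lam τ) Filter.atTop (𝓝 1)) := by
  have hB := beta_pos a b ha hb
  constructor
  · have hG0 : mwG γ β lam τ 0 = 0 := by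
      simp only [mwG, mwS, zero_div, Real.zero_rpow hγ.ne']
      rw [zero_add, ← Real.rpow_add hlam]
      simp
    simp [bmwF, hG0]
  · intro hτp
    -- S x → 0
    have hE : Tendsto (fun x : ℝ => lam ^ (1 - τ) * ((x / β) ^ γ + lam) ^ τ) atTop atTop := by
      have t1 : Tendsto (fun x : ℝ => x / β) atTop atTop :=
        tendsto_id.atTop_div_const hβ
      have t2 : Tendsto (fun x : ℝ => (x / β) ^ γ) atTop atTop :=
        (tendsto_rpow_atTop hγ).comp t1
      have t3 : Tendsto (fun x : ℝ => (x / β) ^ γ + lam) atTop atTop :=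
        tendsto_atTop_add_const_right _ lam t2
      have t4 : Tendsto (fun x : ℝ => ((x / β) ^ γ + lam) ^ τ) atTop atTop :=
        (tendsto_rpow_atTop hτp).comp t3
      exact t4.const_mul_atTop (Real.rpow_pos_of_pos hlam _)
    have hS : Tendsto (fun x : ℝ => mwS γ β lam τ x) atTop (𝓝 0) := by
      have h2 : Tendsto (fun x : ℝ =>
          (lam ^ (1 - τ) * ((x / β) ^ γ + lam) ^ τ - lam) / τ) atTop atTop :=
        (tendsto_atTop_add_const_right _ (-lam) hE).atTop_div_const hτp |>.congr
          (fun x => by ring_nf)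
      have h3 := Real.tendsto_exp_atBot.comp (tendsto_neg_atTop_atBot.comp h2)
      refine h3.congr fun x => ?_
      simp only [Function.comp, mwS]
      congr 1
      ring
    have hG : Tendsto (fun x : ℝ => mwG γ β lam τ x) atTop (𝓝 1) := by
      have := tendsto_const_nhds (α := ℝ) (x := (1:ℝ)) (f := atTop).sub hS
      simpa [mwG] using this
    -- G x ∈ Icc 0 1 for x ≥ 0
    have hmem : ∀ᶠ x : ℝ in atTop, mwG γ β lam τ x ∈ Set.Icc (0:ℝ) 1 := by
      filter_upwards [eventually_ge_atTop (0:ℝ)] with x hx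
      have hSle : mwS γ β lam τ x ≤ 1 := by
        rw [mwS, Real.exp_le_one_iff]
        have h1 : lam ≤ (x / β) ^ γ + lam := le_add_of_nonneg_left
          (Real.rpow_nonneg (div_nonneg hx hβ.le) γ)
        have h2 : lam ^ τ ≤ ((x / β) ^ γ + lam) ^ τ :=
          Real.rpow_le_rpow hlam.le h1 hτp.le
        have h3 : lam ≤ lam ^ (1 - τ) * ((x / β) ^ γ + lam) ^ τ := by
          calc lam = lam ^ (1 - τ) * lam ^ τ := by
                rw [← Real.rpow_add hlam]; simp
            _ ≤ _ := by
                exact mul_le_mul_of_nonneg_left h2 (Real.rpow_nonneg hlam.le _)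
        have : 0 ≤ lam ^ (1 - τ) * ((x / β) ^ γ + lam) ^ τ - lam := by linarith
        rw [neg_div]
        simp only [Left.neg_nonpos_iff]
        positivity
      have hSpos : 0 < mwS γ β lam τ x := Real.exp_pos _
      constructor
      · simp only [mwG]; linarith
      · simp only [mwG]; linarith
    have hGmem : Tendsto (fun x : ℝ => mwG γ β lam τ x) atTop (𝓝[Set.Icc (0:ℝ) 1] 1) :=
      tendsto_nhdsWithin_iff.mpr ⟨hG, hmem⟩
    have hI : ContinuousOn (fun t : ℝ => ∫ u in (0:ℝ)..t, u ^ (a - 1) * (1 - u) ^ (b - 1))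
        (Set.uIcc (0:ℝ) 1) :=
      intervalIntegral.continuousOn_primitive_interval' (beta_intble a b ha hb) left_mem_uIcc
    rw [Set.uIcc_of_le zero_le_one] at hI
    have hcomp : Tendsto (fun x : ℝ =>
        ∫ u in (0:ℝ)..(mwG γ β lam τ x), u ^ (a - 1) * (1 - u) ^ (b - 1)) atTop
        (𝓝 (betaFun a b)) := by
      have := (hI 1 (Set.right_mem_Icc.mpr zero_le_one)).tendsto.comp hGmem
      simpa [betaFun, Function.comp_def] using this
    have hfin := hcomp.const_mul (1 / betaFun a b)
    rw [one_div_mul_cancel hB.ne'] at hfin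
    exact hfin
end

section
/- For every fixed x > 0, as τ tends to 0 (through nonzero values) the four-parameter modified Weibull survival function converges to the generalized Weibull survival function of Mudholkar et al.: lim_{τ→0} exp(−(λ^{1−τ}·((x/β)^γ + λ)^τ − λ)/τ) = (λ/((x/β)^γ + λ))^λ. -/
open Real MeasureTheory Filter Topology Set

/-- as `τ → 0` (through nonzero values), the four-parameter modified Weibull
survival function converges to the generalized Weibull survival function. -/
theorem stmt_14 (γ β lam : ℝ) (hγ : 0 < γ) (hβ : 0 < β) (hlam : 0 < lam)
    (x : ℝ) (hx : 0 < x) :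
    Filter.Tendsto (fun τ : ℝ => mwS γ β lam τ x) (𝓝[≠] 0)
      (𝓝 ((lam / ((x / β) ^ γ + lam)) ^ lam)) := by
  set c : ℝ := (x / β) ^ γ + lam with hc_def
  have hc : 0 < c := by positivity
  have hr : 0 < c / lam := div_pos hc hlam
  -- derivative of t ↦ (c/lam)^t at 0 is log (c/lam)
  have hderiv : HasDerivAt (fun t : ℝ => (c / lam) ^ t) (Real.log (c / lam)) 0 := by
    have := (Real.hasStrictDerivAt_const_rpow hr 0).hasDerivAt
    simpa using this
  have hslope : Filter.Tendsto (fun τ : ℝ => ((c / lam) ^ τ - 1) / τ) (𝓝[≠] 0)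
      (𝓝 (Real.log (c / lam))) := by
    have := hasDerivAt_iff_tendsto_slope.mp hderiv
    refine this.congr' ?_
    filter_upwards [self_mem_nhdsWithin] with τ hτ
    simp [slope_def_field, div_eq_mul_inv, mul_comm]
  have hmain : Filter.Tendsto (fun τ : ℝ => Real.exp (-(lam * (((c / lam) ^ τ - 1) / τ))))
      (𝓝[≠] 0) (𝓝 (Real.exp (-(lam * Real.log (c / lam))))) := by
    exact (Real.continuous_exp.tendsto _).comp ((hslope.const_mul lam).neg)
  have hval : Real.exp (-(lam * Real.log (c / lam))) = (lam / c) ^ lam := by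
    rw [Real.rpow_def_of_pos (div_pos hlam hc),
      show lam / c = (c / lam)⁻¹ by rw [inv_div], Real.log_inv]
    ring_nf
  rw [← hval]
  refine hmain.congr' ?_
  filter_upwards [self_mem_nhdsWithin] with τ hτ
  have hτ' : τ ≠ 0 := hτ
  have key : lam ^ (1 - τ) * c ^ τ = lam * (c / lam) ^ τ := by
    rw [Real.div_rpow hc.le hlam.le, Real.rpow_sub hlam, Real.rpow_one]
    field_simp
  rw [mwS, ← hc_def, key]
  congr 1
  field_simp
end

section
/- If τ > 0, then the four-parameter modified Weibull density integrates to one: ∫₀^∞ (γ/β)·(x/β)^{γ−1}·λ^{1−τ}·((x/β)^γ + λ)^{τ−1}·exp(−(λ^{1−τ}·((x/β)^γ + λ)^τ − λ)/τ) dx = 1. -/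
open Real MeasureTheory Filter Topology Set

/-- for `τ > 0` the four-parameter modified Weibull density integrates
to one on `(0,∞)`. -/
theorem stmt_17 (γ β lam τ : ℝ) (hγ : 0 < γ) (hβ : 0 < β) (hlam : 0 < lam) (hτ : 0 < τ) :
    ∫ x in Set.Ioi (0 : ℝ),
        (γ / β) * (x / β) ^ (γ - 1) * lam ^ (1 - τ) * ((x / β) ^ γ + lam) ^ (τ - 1) *
          Real.exp (-(lam ^ (1 - τ) * ((x / β) ^ γ + lam) ^ τ - lam) / τ) = 1 := by
  set F : ℝ → ℝ := fun x => -Real.exp (-(lam ^ (1 - τ) * ((x / β) ^ γ + lam) ^ τ - lam) / τ)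
    with hF
  have hF0 : F 0 = -1 := by
    simp [hF, zero_div, Real.zero_rpow hγ.ne', ← Real.rpow_add hlam]
  have hcont : ContinuousWithinAt F (Ici 0) 0 := by
    have hb : (fun x : ℝ => (x / β) ^ γ + lam) 0 ≠ 0 := by
      simp [zero_div, Real.zero_rpow hγ.ne', hlam.ne']
    have hc1 : ContinuousWithinAt (fun x : ℝ => ((x / β) ^ γ + lam) ^ τ) (Ici 0) 0 :=
      (((continuousWithinAt_id.div_const β).rpow_const (Or.inr hγ.le)).add_const
        lam).rpow_const (Or.inl hb)
    exact (Real.continuous_exp.continuousAt.comp_continuousWithinAt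
      ((((hc1.const_mul _).sub continuousWithinAt_const).neg).div_const τ)).neg
  have hderiv : ∀ x ∈ Ioi (0:ℝ), HasDerivAt F
      ((γ / β) * (x / β) ^ (γ - 1) * lam ^ (1 - τ) * ((x / β) ^ γ + lam) ^ (τ - 1) *
          Real.exp (-(lam ^ (1 - τ) * ((x / β) ^ γ + lam) ^ τ - lam) / τ)) x := by
    intro x hx
    have hxβ : 0 < x / β := div_pos hx hβ
    have h1 : HasDerivAt (fun x : ℝ => (x / β) ^ γ) (γ * (x / β) ^ (γ - 1) * (1 / β)) x := by
      have := (Real.hasDerivAt_rpow_const (p := γ) (Or.inl hxβ.ne')).comp x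
        ((hasDerivAt_id x).div_const β)
      simpa [mul_comm, Function.comp_def] using this
    have h2 : HasDerivAt (fun x : ℝ => lam ^ (1 - τ) * ((x / β) ^ γ + lam) ^ τ)
        (lam ^ (1 - τ) * (τ * ((x / β) ^ γ + lam) ^ (τ - 1) * (γ * (x / β) ^ (γ - 1) * (1 / β)))) x := by
      apply HasDerivAt.const_mul
      have hb : (x / β) ^ γ + lam ≠ 0 := by positivity
      have := (Real.hasDerivAt_rpow_const (p := τ) (Or.inl hb)).comp x (h1.add_const lam)
      simpa [mul_comm, mul_assoc, mul_left_comm, Function.comp_def] using this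
    have h3 := (((h2.sub_const lam).div_const τ).neg.exp).neg
    rw [hF]
    simp only [neg_div]
    convert h3 using 1
    · rfl
    · rfl
    · rfl
    simp only [Pi.neg_apply]
    field_simp
  have hpos : ∀ x ∈ Ioi (0:ℝ), 0 ≤
      (γ / β) * (x / β) ^ (γ - 1) * lam ^ (1 - τ) * ((x / β) ^ γ + lam) ^ (τ - 1) *
          Real.exp (-(lam ^ (1 - τ) * ((x / β) ^ γ + lam) ^ τ - lam) / τ) := by
    intro x hx
    have hxβ : 0 < x / β := div_pos hx hβ
    positivity
  have htop : Tendsto F atTop (𝓝 0) := by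
    rw [hF]
    rw [show (0:ℝ) = -0 by ring]
    apply Tendsto.neg
    apply Real.tendsto_exp_atBot.comp
    apply Tendsto.atBot_div_const hτ
    apply tendsto_neg_atTop_atBot.comp
    apply tendsto_atTop_add_const_right _ (-lam)
    have h1 : Tendsto (fun x : ℝ => (x / β) ^ γ) atTop atTop :=
      (tendsto_rpow_atTop hγ).comp (tendsto_id.atTop_div_const hβ)
    have h2 : Tendsto (fun x : ℝ => ((x / β) ^ γ + lam) ^ τ) atTop atTop :=
      (tendsto_rpow_atTop hτ).comp (tendsto_atTop_add_const_right _ lam h1)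
    simpa [sub_eq_add_neg] using h2.const_mul_atTop (Real.rpow_pos_of_pos hlam _)
  have := integral_Ioi_of_hasDerivAt_of_nonneg hcont hderiv hpos htop
  rw [this, hF0]
  ring
end
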